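/- Let B be a small groupoid, P = ⟨cod, dom⟩ : B^≅ ⥤ B × B with algebra structure str_B as above, and let (F : A ⥤ B, S) be a split cloven isofibration (an algebra). Then the unique algebra morphism T over pr₂ : B × B ⟶ B from the product algebra pr₁*(F,S) ∧ (P, str_B) (whose underlying functor is the diagonal D : M F ⥤ B × B of the pullback of P along F×id) to (F, S) satisfying strictness T ∘ L F = id_A is T = S, the structure map of the algebra. -/

import Mathlib

open CategoryTheory

universe u

variable {A B : Type u} [SmallCategory A] [SmallCategory B]

/-- `M F` for `F : A ⥤ B`: objects are pairs `(A, x : B ≅ F A)`. -/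
abbrev MCat {A B : Type u} [SmallCategory A] [SmallCategory B] (F : A ⥤ B) :=
  ObjectProperty.FullSubcategory (fun c : Comma (𝟭 B) F => IsIso c.hom)

/-- `L F : A ⥤ M F`, sending `A` to `(A, id_{F A})`. -/
def lCat (F : A ⥤ B) : A ⥤ MCat F where
  obj a := ⟨{ left := F.obj a, right := a, hom := 𝟙 (F.obj a) }, by dsimp; infer_instance⟩
  map f := ⟨{ left := F.map f, right := f }⟩

/-- `R F : M F ⥤ B`, sending `(A, x : B ≅ F A)` to `B`. -/
def rCat (F : A ⥤ B) : MCat F ⥤ B :=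
  ObjectProperty.ι _ ⋙ Comma.fst _ _

/-- The projection `M F ⥤ A`. -/
def mSnd (F : A ⥤ B) : MCat F ⥤ A :=
  ObjectProperty.ι _ ⋙ Comma.snd _ _

/-- The multiplication `μ_F : M (R F) ⥤ M F`. -/
def muF (F : A ⥤ B) : MCat (rCat F) ⥤ MCat F where
  obj c := ⟨{ left := c.obj.left, right := c.obj.right.obj.right,
              hom := c.obj.hom ≫ c.obj.right.obj.hom },
    IsIso.comp_isIso' c.2 c.obj.right.2⟩
  map := fun {c c'} m =>
    ⟨{ left := m.hom.left
       right := m.hom.right.hom.right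
       w := by
        have h1 := m.hom.w
        have h2 := m.hom.right.hom.w
        dsimp [rCat] at h1 h2 ⊢
        rw [← Category.assoc, h1, Category.assoc]; erw [h2]; rw [← Category.assoc] }⟩
  map_id _ := rfl
  map_comp _ _ := rfl

/-- The functor `M(id_B, S) : M(R F) ⥤ M F` induced by the structure map `S` (which
satisfies `S ⋙ F = R F`, i.e. it is a morphism `R F ⟶ F` in `Cat²` over `id_B`). -/
def mS (F : A ⥤ B) (S : MCat F ⥤ A) (hSF : S ⋙ F = rCat F) :
    MCat (rCat F) ⥤ MCat F where
  obj c :=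
    haveI := c.2
    ⟨{ left := c.obj.left, right := S.obj c.obj.right,
       hom := c.obj.hom ≫ eqToHom (Functor.congr_obj hSF c.obj.right).symm },
      by dsimp; infer_instance⟩
  map := fun {c c'} m =>
    ⟨{ left := m.hom.left
       right := S.map m.hom.right
       w := by
        have h : F.map (S.map m.hom.right) =
            eqToHom (Functor.congr_obj hSF c.obj.right) ≫ m.hom.right.hom.left ≫
              eqToHom (Functor.congr_obj hSF c'.obj.right).symm := by
          simpa [rCat] using Functor.congr_hom hSF m.hom.right
        have hw := m.hom.w
        dsimp [rCat] at hw ⊢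
        rw [h, ← Category.assoc, hw]
        simp
        erw [eqToHom_trans_assoc, eqToHom_refl, Category.id_comp]
        rfl }⟩
  map_id c := by
    apply ObjectProperty.hom_ext
    apply CommaMorphism.ext
    · rfl
    · exact S.map_id c.obj.right
  map_comp f g := by
    apply ObjectProperty.hom_ext
    apply CommaMorphism.ext
    · rfl
    · exact S.map_comp f.hom.right g.hom.right

/-- The underlying functor `D = ⟨F ∘ pr_A, R F⟩ : M F ⥤ B × B` of the product algebra
`pr₁*(F, S) ∧ (⟨cod, dom⟩, str_B)`, sending `(A, x : B ≅ F A)` to `(F A, B)`. -/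
def dF (F : A ⥤ B) : MCat F ⥤ B × B :=
  Functor.prod' (mSnd F ⋙ F) (rCat F)

/-- The object `(A, b₁ : B₁ ≅ F A)` of `M F` extracted from an object of `M D`. -/
def sdAux (F : A ⥤ B) (c : MCat (dF F)) : MCat F :=
  ⟨{ left := c.obj.left.1, right := c.obj.right.obj.right, hom := c.obj.hom.1 },
    ((isIso_prod_iff (C := B) (D := B)).mp c.2).1⟩

/-- The morphism part of `sdAux`. -/
def sdAuxMap (F : A ⥤ B) {c c' : MCat (dF F)} (m : c ⟶ c') :
    sdAux F c ⟶ sdAux F c' where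
  hom.left := m.hom.left.1
  hom.right := m.hom.right.hom.right
  hom.w := congrArg Prod.fst m.hom.w

/-- The structure map `S_D : M D ⥤ M F` of the product algebra, sending
`((A, x), (b₁, b₂))` to `(S(A, b₁), b₁⁻¹ ∘ x ∘ b₂)`. -/
noncomputable def sD (F : A ⥤ B) (S : MCat F ⥤ A) (hSF : S ⋙ F = rCat F) :
    MCat (dF F) ⥤ MCat F where
  obj c :=
    haveI : IsIso c.obj.hom.1 := ((isIso_prod_iff (C := B) (D := B)).mp c.2).1
    haveI : IsIso c.obj.hom.2 := ((isIso_prod_iff (C := B) (D := B)).mp c.2).2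
    haveI := c.obj.right.2
    ⟨{ left := c.obj.left.2, right := S.obj (sdAux F c),
       hom := c.obj.hom.2 ≫ c.obj.right.obj.hom ≫ (inv c.obj.hom.1 :) ≫
         eqToHom (Functor.congr_obj hSF (sdAux F c)).symm },
      IsIso.comp_isIso' ‹IsIso c.obj.hom.2› (IsIso.comp_isIso' c.obj.right.2
        (IsIso.comp_isIso' (IsIso.inv_isIso (f := c.obj.hom.1)) (Iso.isIso_hom (eqToIso (Functor.congr_obj hSF (sdAux F c)).symm))))⟩
  map := fun {c c'} m =>
    ⟨{ left := m.hom.left.2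
       right := S.map (sdAuxMap F m)
       w := by
        haveI : IsIso c.obj.hom.1 := ((isIso_prod_iff (C := B) (D := B)).mp c.2).1
        haveI : IsIso c'.obj.hom.1 := ((isIso_prod_iff (C := B) (D := B)).mp c'.2).1
        have hfs : F.map (S.map (sdAuxMap F m)) =
            eqToHom (Functor.congr_obj hSF (sdAux F c)) ≫ m.hom.left.1 ≫
              eqToHom (Functor.congr_obj hSF (sdAux F c')).symm := by
          have := Functor.congr_hom hSF (sdAuxMap F m)
          simp [rCat, sdAuxMap] at this
          exact this
        have c1 : m.hom.left.1 ≫ c'.obj.hom.1 = c.obj.hom.1 ≫ F.map m.hom.right.hom.right :=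
          congrArg Prod.fst m.hom.w
        have c2 : m.hom.left.2 ≫ c'.obj.hom.2 = c.obj.hom.2 ≫ m.hom.right.hom.left :=
          congrArg Prod.snd m.hom.w
        have nw : m.hom.right.hom.left ≫ c'.obj.right.obj.hom =
            c.obj.right.obj.hom ≫ F.map m.hom.right.hom.right := m.hom.right.hom.w
        have key : F.map m.hom.right.hom.right ≫ (inv c'.obj.hom.1 :) =
            (inv c.obj.hom.1 :) ≫ m.hom.left.1 := by
          erw [IsIso.comp_inv_eq, Category.assoc, c1, IsIso.inv_hom_id_assoc]
          rfl
        change m.hom.left.2 ≫ c'.obj.hom.2 ≫ c'.obj.right.obj.hom ≫ (inv c'.obj.hom.1 :) ≫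
            eqToHom _ = (c.obj.hom.2 ≫ c.obj.right.obj.hom ≫ (inv c.obj.hom.1 :) ≫ eqToHom _) ≫
            F.map (S.map (sdAuxMap F m))
        have e1 : F.map m.hom.right.hom.right ≫ (inv c'.obj.hom.1 :) ≫
            eqToHom (Functor.congr_obj hSF (sdAux F c')).symm =
            (inv c.obj.hom.1 :) ≫ eqToHom (Functor.congr_obj hSF (sdAux F c)).symm ≫
              F.map (S.map (sdAuxMap F m)) := by
          rw [hfs]
          refine ((Category.assoc _ _ _).symm.trans ((key =≫ _).trans (Category.assoc _ _ _))).trans ?_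
          simp
          erw [eqToHom_trans_assoc, eqToHom_refl, Category.id_comp]
          rfl
        erw [← Category.assoc, c2, Category.assoc, reassoc_of% nw]
        refine (congrArg (fun t => c.obj.hom.2 ≫ c.obj.right.obj.hom ≫ t) e1).trans ?_
        exact ((Category.assoc _ _ _).trans (congrArg (c.obj.hom.2 ≫ ·)
          ((Category.assoc _ _ _).trans
            (congrArg (c.obj.right.obj.hom ≫ ·) (Category.assoc _ _ _))))).symm }⟩
  map_id c := by
    apply ObjectProperty.hom_ext
    apply CommaMorphism.ext
    · rfl
    · exact S.map_id (sdAux F c)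
  map_comp f g := by
    apply ObjectProperty.hom_ext
    apply CommaMorphism.ext
    · rfl
    · exact S.map_comp (sdAuxMap F f) (sdAuxMap F g)

/-- The functor `M(pr₂, T) : M D ⥤ M F` induced by a candidate carrier
`(pr₂, T) : (D, S_D) ⟶ (F, S)` (with `T` satisfying `T ⋙ F = R F`). -/
def mPrT (F : A ⥤ B) (T : MCat F ⥤ A) (hT : T ⋙ F = rCat F) :
    MCat (dF F) ⥤ MCat F where
  obj c :=
    haveI : IsIso c.obj.hom.2 := ((isIso_prod_iff (C := B) (D := B)).mp c.2).2
    ⟨{ left := c.obj.left.2, right := T.obj c.obj.right,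
       hom := c.obj.hom.2 ≫ eqToHom (Functor.congr_obj hT c.obj.right).symm },
      IsIso.comp_isIso' this (Iso.isIso_hom (eqToIso (Functor.congr_obj hT c.obj.right).symm))⟩
  map := fun {c c'} m =>
    ⟨{ left := m.hom.left.2
       right := T.map m.hom.right
       w := by
        have h : F.map (T.map m.hom.right) =
            eqToHom (Functor.congr_obj hT c.obj.right) ≫ m.hom.right.hom.left ≫
              eqToHom (Functor.congr_obj hT c'.obj.right).symm := by
          simpa [rCat] using Functor.congr_hom hT m.hom.right
        have c2 : m.hom.left.2 ≫ c'.obj.hom.2 = c.obj.hom.2 ≫ m.hom.right.hom.left :=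
          congrArg Prod.snd m.hom.w
        dsimp
        rw [h, ← Category.assoc, c2]
        simp
        erw [Category.assoc, eqToHom_trans_assoc, eqToHom_refl, Category.id_comp]
        rfl }⟩
  map_id c := by
    apply ObjectProperty.hom_ext
    apply CommaMorphism.ext
    · rfl
    · exact T.map_id c.obj.right
  map_comp f g := by
    apply ObjectProperty.hom_ext
    apply CommaMorphism.ext
    · rfl
    · exact T.map_comp f.hom.right g.hom.right

/-!
Precompose the homomorphism law `M(pr₂, T) ⋙ S = S_D ⋙ T` with the functor
`mDiag F : M F ⥤ M D` sending `(a, x : b ≅ F a)` to `((a, x), (x, 𝟙 b) : (b, b) ≅ D (a, x))`.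
On these objects `b₂ = 𝟙` and `b₁ = x`, so `M(pr₂, T)` becomes `T ⋙ L F` and `S_D` becomes
`S ⋙ L F`; the unit law `L F ⋙ S = 𝟭` and strictness `L F ⋙ T = 𝟭` then reduce the two sides of
the law to `T` and `S`.
-/

namespace MCat

variable {F : A ⥤ B}

lemma obj_ext {x y : MCat F} (hl : x.obj.left = y.obj.left) (hr : x.obj.right = y.obj.right)
    (hhom : x.obj.hom ≫ eqToHom (congrArg F.obj hr) = eqToHom hl ≫ y.obj.hom) : x = y := by
  obtain ⟨⟨l, r, f⟩, _⟩ := x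
  obtain ⟨⟨l', r', f'⟩, _⟩ := y
  dsimp at hl hr
  subst hl hr
  simp only [eqToHom_refl, Category.comp_id, Category.id_comp] at hhom
  subst hhom
  rfl

lemma functor_ext {C : Type*} [Category C] {G H : C ⥤ MCat F}
    (hR : G ⋙ rCat F = H ⋙ rCat F) (hA : G ⋙ mSnd F = H ⋙ mSnd F)
    (hhom : ∀ c, (G.obj c).obj.hom ≫ eqToHom (congrArg F.obj (Functor.congr_obj hA c)) =
      eqToHom (Functor.congr_obj hR c) ≫ (H.obj c).obj.hom) : G = H := by
  refine CategoryTheory.Functor.ext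
    (fun c => obj_ext (Functor.congr_obj hR c) (Functor.congr_obj hA c) (hhom c))
    fun c c' f => ?_
  apply ObjectProperty.hom_ext
  ext
  · simp only [ObjectProperty.FullSubcategory.comp_hom, Comma.comp_left,
      ObjectProperty.eqToHom_hom, Comma.eqToHom_left]
    exact Functor.congr_hom hR f
  · simp only [ObjectProperty.FullSubcategory.comp_hom, Comma.comp_right,
      ObjectProperty.eqToHom_hom, Comma.eqToHom_right]
    exact Functor.congr_hom hA f

end MCat

def mDiag (F : A ⥤ B) : MCat F ⥤ MCat (dF F) where
  obj c :=
    ⟨{ left := (c.obj.left, c.obj.left), right := c, hom := Prod.mkHom c.obj.hom (𝟙 c.obj.left) },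
      (isIso_prod_iff (C := B) (D := B)).mpr ⟨c.2, IsIso.id _⟩⟩
  map f :=
    ⟨{ left := (f.hom.left, f.hom.left)
       right := f
       w := Prod.ext f.hom.w (by simp [dF, rCat]) }⟩

lemma mDiag_comp_mPrT (F : A ⥤ B) (T : MCat F ⥤ A) (hT : T ⋙ F = rCat F) :
    mDiag F ⋙ mPrT F T hT = T ⋙ lCat F :=
  MCat.functor_ext hT.symm rfl fun c => by
    change (𝟙 c.obj.left ≫ eqToHom _) ≫ eqToHom _ = eqToHom _ ≫ 𝟙 (F.obj (T.obj c))
    simpa using eqToHom_trans _ _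

lemma mDiag_comp_sD (F : A ⥤ B) (S : MCat F ⥤ A) (hSF : S ⋙ F = rCat F) :
    mDiag F ⋙ sD F S hSF = S ⋙ lCat F :=
  MCat.functor_ext hSF.symm rfl fun c => by
    have : IsIso c.obj.hom := c.2
    change (𝟙 c.obj.left ≫ c.obj.hom ≫ inv c.obj.hom ≫ eqToHom _) ≫ eqToHom _ =
      eqToHom _ ≫ 𝟙 (F.obj (S.obj c))
    simpa using eqToHom_trans _ _

theorem stmt_19_general {A B : Type u} [SmallCategory A] [Groupoid.{u} B]
    (F : A ⥤ B) (S : MCat F ⥤ A) (hSF : S ⋙ F = rCat F)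
    (hSL : lCat F ⋙ S = 𝟭 A)
    (T : MCat F ⥤ A) (hT : T ⋙ F = rCat F)
    (hhom : mPrT F T hT ⋙ S = sD F S hSF ⋙ T)
    (hstrict : lCat F ⋙ T = 𝟭 A) :
    T = S :=
  calc T = mDiag F ⋙ mPrT F T hT ⋙ S := by
          rw [← Functor.assoc, mDiag_comp_mPrT, Functor.assoc, hSL, Functor.comp_id]
    _ = mDiag F ⋙ sD F S hSF ⋙ T := by rw [hhom]
    _ = S := by rw [← Functor.assoc, mDiag_comp_sD, Functor.assoc, hstrict, Functor.comp_id]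

/-- let `B` be a small groupoid and `(F : A ⥤ B, S)` an algebra (a split
cloven isofibration): `S ⋙ F = R F`, `S` is retraction of the unit, and `S` satisfies
the multiplication law.  If `(pr₂, T)` is an algebra morphism from the product algebra
`(D, S_D)` to `(F, S)` which is strict (`T ∘ L F = id`), then `T = S`. -/
theorem stmt_19 {A B : Type u} [SmallCategory A] [Groupoid.{u} B]
    (F : A ⥤ B) (S : MCat F ⥤ A) (hSF : S ⋙ F = rCat F)
    (hSL : lCat F ⋙ S = 𝟭 A)
    (hmul : mS F S hSF ⋙ S = muF F ⋙ S)
    (T : MCat F ⥤ A) (hT : T ⋙ F = rCat F)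
    (hhom : mPrT F T hT ⋙ S = sD F S hSF ⋙ T)
    (hstrict : lCat F ⋙ T = 𝟭 A) :
    T = S :=
  stmt_19_general F S hSF hSL T hT hhom hstrict
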